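/- arXiv:2504.04861 — 2 statements merged into one kernel-verified Lean document; each statement's English description precedes it below -/
import Mathlib

section
/- Let V be an m×m real orthogonal matrix and let S be an m×m diagonal matrix with 0 ≤ S_{jj} < 1 for all j. Set P = V·S·Vᵀ and Z = V·(I_m − S)^{-1/2}, where (I_m − S)^{-1/2} is the diagonal matrix with entries 1/√(1 − S_{jj}). Then the Neumann series Σ_{ℓ=0}^{∞} P^ℓ converges (entrywise) to V·(I_m − S)⁻¹·Vᵀ, and for all indices e, f ∈ {1,…,m}: Z_e · Z_f = (Σ_{ℓ=0}^{∞} P^ℓ)_{e,f}, i.e., the dot product of the e-th and f-th rows of Z equals the Katz index of f with respect to e over the graph with transition matrix P, taken with weight α = 1. (This is Theorem 3, with P the transition matrix of the line graph G̃ arising from the full SVD of D^{-1/2}E.) -/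
open Matrix

/-- Theorem 3: with `V` orthogonal, `S` diagonal with `0 ≤ S_jj < 1`,
`P = V·S·Vᵀ` and `Z = V·(I − S)^{-1/2}`, the Neumann series `Σ_ℓ P^ℓ` converges
entrywise to `V·(I − S)⁻¹·Vᵀ`, and the dot product of rows `e`, `f` of `Z` equals
the Katz index `(Σ_ℓ P^ℓ)_{e,f}` with weight `α = 1`. -/
theorem katz_index_embedding {m : ℕ}
    (V : Matrix (Fin m) (Fin m) ℝ)
    (hV : Vᵀ * V = 1 ∧ V * Vᵀ = 1)
    (s : Fin m → ℝ) (hs : ∀ j, 0 ≤ s j ∧ s j < 1)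
    (P Z : Matrix (Fin m) (Fin m) ℝ)
    (hP : P = V * Matrix.diagonal s * Vᵀ)
    (hZ : Z = V * Matrix.diagonal (fun j => 1 / Real.sqrt (1 - s j))) :
    (∀ e f, HasSum (fun ℓ : ℕ => (P ^ ℓ) e f)
        ((V * Matrix.diagonal (fun j => (1 - s j)⁻¹) * Vᵀ) e f)) ∧
    ∀ e f, ∑ j, Z e j * Z f j
        = (V * Matrix.diagonal (fun j => (1 - s j)⁻¹) * Vᵀ) e f := by
  have hpow : ∀ ℓ : ℕ, P ^ ℓ = V * Matrix.diagonal (fun j => s j ^ ℓ) * Vᵀ := by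
    intro ℓ
    induction ℓ with
    | zero =>
        simp only [pow_zero]
        rw [show (Matrix.diagonal (fun _ : Fin m => (1:ℝ))) = 1 from Matrix.diagonal_one,
          Matrix.mul_one, hV.2]
    | succ n ih =>
        rw [pow_succ, ih, hP]
        rw [show V * Matrix.diagonal (fun j => s j ^ n) * Vᵀ * (V * Matrix.diagonal s * Vᵀ)
            = V * (Matrix.diagonal (fun j => s j ^ n) * (Vᵀ * V) * Matrix.diagonal s) * Vᵀ by
          noncomm_ring]
        rw [hV.1, Matrix.mul_one, Matrix.diagonal_mul_diagonal]
        simp [pow_succ]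
  have hentry : ∀ (ℓ : ℕ) (e f : Fin m),
      (P ^ ℓ) e f = ∑ j, V e j * s j ^ ℓ * V f j := by
    intro ℓ e f
    rw [hpow]
    simp [Matrix.mul_apply, Matrix.diagonal_apply, Finset.sum_ite_eq, Matrix.transpose_apply,
      mul_comm]
  have hrhs : ∀ e f, (V * Matrix.diagonal (fun j => (1 - s j)⁻¹) * Vᵀ) e f
      = ∑ j, V e j * (1 - s j)⁻¹ * V f j := by
    intro e f
    simp [Matrix.mul_apply, Matrix.diagonal_apply, Finset.sum_ite_eq, Matrix.transpose_apply,
      mul_comm]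
  constructor
  · intro e f
    rw [hrhs]
    have : HasSum (fun ℓ : ℕ => ∑ j, V e j * s j ^ ℓ * V f j)
        (∑ j, V e j * (1 - s j)⁻¹ * V f j) := by
      apply hasSum_sum
      intro j _
      have hg : HasSum (fun ℓ : ℕ => s j ^ ℓ) (1 - s j)⁻¹ := by
        have := hasSum_geometric_of_lt_one (hs j).1 (hs j).2
        exact this
      have := (hg.mul_left (V e j)).mul_right (V f j)
      simpa [mul_assoc, mul_comm, mul_left_comm] using this
    convert this using 1
    funext ℓ
    exact hentry ℓ e f
  · intro e f
    rw [hrhs]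
    have hZentry : ∀ (a : Fin m) (j : Fin m), Z a j = V a j * (1 / Real.sqrt (1 - s j)) := by
      intro a j
      rw [hZ]
      simp [Matrix.mul_apply, Matrix.diagonal_apply, Finset.sum_ite_eq]
    apply Finset.sum_congr rfl
    intro j _
    rw [hZentry, hZentry]
    have h1 : (0:ℝ) < 1 - s j := by linarith [(hs j).2]
    have hsq : 1 / Real.sqrt (1 - s j) * (1 / Real.sqrt (1 - s j)) = (1 - s j)⁻¹ := by
      rw [div_mul_div_comm, one_mul, Real.mul_self_sqrt h1.le, one_div]
    calc V e j * (1 / Real.sqrt (1 - s j)) * (V f j * (1 / Real.sqrt (1 - s j)))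
        = V e j * (1 / Real.sqrt (1 - s j) * (1 / Real.sqrt (1 - s j))) * V f j := by ring
      _ = V e j * (1 - s j)⁻¹ * V f j := by rw [hsq]
end

section
/- Let B be the n×m oriented incidence matrix of a graph G (for each edge e = e_{u,i}, the e-th column of B equals 𝟙_u − 𝟙_i), and suppose B = Φ·Λ·Ψᵀ is a compact singular value decomposition with Φ n×k, ΦᵀΦ = I_k, Ψ m×k, ΨᵀΨ = I_k, and Λ a k×k diagonal matrix with strictly positive diagonal entries. Let L = B·Bᵀ and L† = Φ·Λ⁻²·Φᵀ be its Moore–Penrose pseudoinverse, and define the spanning centrality of edge e_{u,i} by s(e_{u,i}) = L†_{u,u} + L†_{i,i} − L†_{u,i} − L†_{i,u}. Then for every edge e_{u,i}: s(e_{u,i}) = ‖Ψ_{e_{u,i}}‖₂², the squared Euclidean norm of the row of Ψ indexed by e_{u,i}. (This is Theorem 4.) -/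
open Matrix

/-- Theorem 4: let `B` be the oriented incidence matrix of a graph
(column of edge `e` is `𝟙_{u e} − 𝟙_{i e}`), with compact SVD `B = Φ·Λ·Ψᵀ`,
`L = B·Bᵀ` and `L† = Φ·Λ⁻²·Φᵀ`. Then the spanning centrality
`s(e) = L†_{u,u} + L†_{i,i} − L†_{u,i} − L†_{i,u}` equals `‖Ψ_e‖₂²`. -/
theorem spanning_centrality_eq_row_norm {n m k : ℕ}
    (B : Matrix (Fin n) (Fin m) ℝ)
    (u i : Fin m → Fin n) (hui : ∀ e, u e ≠ i e)
    (hcol : ∀ (e : Fin m) (x : Fin n),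
      B x e = (if x = u e then (1 : ℝ) else 0) - (if x = i e then (1 : ℝ) else 0))
    (Φ : Matrix (Fin n) (Fin k) ℝ) (Ψ : Matrix (Fin m) (Fin k) ℝ)
    (lam : Fin k → ℝ) (hlam : ∀ j, 0 < lam j)
    (hΦ : Φᵀ * Φ = 1) (hΨ : Ψᵀ * Ψ = 1)
    (hSVD : B = Φ * Matrix.diagonal lam * Ψᵀ)
    (L Lp : Matrix (Fin n) (Fin n) ℝ)
    (hL : L = B * Bᵀ)
    (hLp : Lp = Φ * Matrix.diagonal (fun j => ((lam j) ^ 2)⁻¹) * Φᵀ) :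
    ∀ e, Lp (u e) (u e) + Lp (i e) (i e) - Lp (u e) (i e) - Lp (i e) (u e)
      = ∑ j, (Ψ e j) ^ 2 := by
  intro e
  -- key: Φᵀ * B = Λ * Ψᵀ
  have hΦB : Φᵀ * B = Matrix.diagonal lam * Ψᵀ := by
    rw [hSVD, ← Matrix.mul_assoc, ← Matrix.mul_assoc, hΦ, Matrix.one_mul]
  -- componentwise key fact
  have key : ∀ j, Φ (u e) j - Φ (i e) j = lam j * Ψ e j := by
    intro j
    have h1 : (Φᵀ * B) j e = Φ (u e) j - Φ (i e) j := by
      simp only [Matrix.mul_apply, Matrix.transpose_apply, hcol e, mul_sub,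
        mul_ite, mul_one, mul_zero]
      rw [Finset.sum_sub_distrib]
      simp
    have h2 : (Matrix.diagonal lam * Ψᵀ) j e = lam j * Ψ e j := by
      simp [Matrix.diagonal_mul]
    rw [hΦB] at h1
    rw [h2] at h1
    linarith
  -- entry formula for Lp
  have hent : ∀ a b, Lp a b = ∑ j, Φ a j * ((lam j) ^ 2)⁻¹ * Φ b j := by
    intro a b
    rw [hLp]
    simp [Matrix.mul_apply, Matrix.diagonal, Finset.sum_mul]
  simp only [hent]
  rw [← Finset.sum_add_distrib, ← Finset.sum_sub_distrib, ← Finset.sum_sub_distrib]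
  apply Finset.sum_congr rfl
  intro j _
  have hk := key j
  have hl : lam j ≠ 0 := ne_of_gt (hlam j)
  have : (Φ (u e) j - Φ (i e) j) ^ 2 = (lam j * Ψ e j) ^ 2 := by rw [hk]
  have hexp : Φ (u e) j * ((lam j) ^ 2)⁻¹ * Φ (u e) j + Φ (i e) j * ((lam j) ^ 2)⁻¹ * Φ (i e) j
      - Φ (u e) j * ((lam j) ^ 2)⁻¹ * Φ (i e) j - Φ (i e) j * ((lam j) ^ 2)⁻¹ * Φ (u e) j
      = (Φ (u e) j - Φ (i e) j) ^ 2 * ((lam j) ^ 2)⁻¹ := by ring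
  rw [hexp, this]
  field_simp
end
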